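/- arXiv:1011.3032 — 5 statements merged into one kernel-verified Lean document; each statement's English description precedes it below -/
import Mathlib

section
/- Let Γ be a finite oriented cycle-free graph and let γ be a covering subgraph of Γ, given by a partition of the vertex set into connected subsets P_1, ..., P_n. If the contracted graph Γ/γ (obtained by shrinking each P_j to a single vertex) is cycle-free, then each P_j is a convex subset of the poset of vertices of Γ, i.e. if v, w ∈ P_j and v ≤ u ≤ w in the path-order, then u ∈ P_j. -/
universe u v

variable {V : Type u} {E : Type v}

/-- One directed step along an edge of the oriented graph `(src, tgt)`. -/
def Step (src tgt : E → V) (a b : V) : Prop := ∃ e, src e = a ∧ tgt e = b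

/-- Strict path order: there is a nonempty directed path from `a` to `b`. -/
def PathLt (src tgt : E → V) : V → V → Prop := Relation.TransGen (Step src tgt)

/-- Weak path order: there is a (possibly empty) directed path from `a` to `b`. -/
def PathLe (src tgt : E → V) : V → V → Prop := Relation.ReflTransGen (Step src tgt)

/-- The graph is cycle-free: no nonempty directed path from a vertex to itself. -/
def CycleFree (src tgt : E → V) : Prop := ∀ x, ¬ PathLt src tgt x x

/-- Undirected step inside the vertex subset `P` (edge traversed forwards or backwards,
with both endpoints in `P`). -/
def UStepIn (src tgt : E → V) (P : Set V) (a b : V) : Prop :=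
  a ∈ P ∧ b ∈ P ∧ ∃ e, (src e = a ∧ tgt e = b) ∨ (src e = b ∧ tgt e = a)

/-- `P` induces a connected subgraph: any two of its vertices are joined by a walk
inside `P`. -/
def ConnSet (src tgt : E → V) (P : Set V) : Prop :=
  ∀ v ∈ P, ∀ w ∈ P, Relation.ReflTransGen (UStepIn src tgt P) v w

/-- A covering subgraph: a partition (setoid) of the vertex set all of whose blocks
induce connected subgraphs. -/
def CoveringSetoid (src tgt : E → V) (s : Setoid V) : Prop :=
  ∀ v : V, ConnSet src tgt {w | s.r v w}

/-- Edges of the contracted graph `Γ/s`: edges of `Γ` joining distinct blocks. -/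
def CEdge (src tgt : E → V) (s : Setoid V) : Type v := {e : E // ¬ s.r (src e) (tgt e)}

/-- Source map of the contracted graph. -/
def csrc (src tgt : E → V) (s : Setoid V) (e : CEdge src tgt s) : Quotient s :=
  Quotient.mk s (src e.1)

/-- Target map of the contracted graph. -/
def ctgt (src tgt : E → V) (s : Setoid V) (e : CEdge src tgt s) : Quotient s :=
  Quotient.mk s (tgt e.1)

/-- Edges of the induced subgraph `Γ(P)`: edges with both endpoints in `P`. -/
def IEdge (src tgt : E → V) (P : Set V) : Type v := {e : E // src e ∈ P ∧ tgt e ∈ P}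

/-- Source map of the induced subgraph. -/
def isrc (src tgt : E → V) (P : Set V) (e : IEdge src tgt P) : P := ⟨src e.1, e.2.1⟩

/-- Target map of the induced subgraph. -/
def itgt (src tgt : E → V) (P : Set V) (e : IEdge src tgt P) : P := ⟨tgt e.1, e.2.2⟩

/-- `A < B` for vertex subsets: every comparable pair `a ∈ A`, `b ∈ B` satisfies `a < b`. -/
def SetLt (src tgt : E → V) (A B : Set V) : Prop :=
  ∀ a ∈ A, ∀ b ∈ B, (PathLt src tgt a b ∨ PathLt src tgt b a) → PathLt src tgt a b

/-- Admissible cut `(V₁, V₂)` of the graph: a partition of the vertex set into two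
pieces with `V₂ < V₁`. -/
def AdmCut (src tgt : E → V) (V1 V2 : Set V) : Prop :=
  Disjoint V1 V2 ∧ V1 ∪ V2 = Set.univ ∧ SetLt src tgt V2 V1

/-- Directed step staying inside `P` (path order of the induced subgraph). -/
def StepIn (src tgt : E → V) (P : Set V) (a b : V) : Prop :=
  a ∈ P ∧ b ∈ P ∧ ∃ e, src e = a ∧ tgt e = b

/-- Strict path order of the subgraph induced on `P`. -/
def PathLtIn (src tgt : E → V) (P : Set V) : V → V → Prop :=
  Relation.TransGen (StepIn src tgt P)

/-- `A < B` relative to the induced subgraph on `P`. -/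
def SetLtIn (src tgt : E → V) (P A B : Set V) : Prop :=
  ∀ a ∈ A, ∀ b ∈ B, (PathLtIn src tgt P a b ∨ PathLtIn src tgt P b a) →
    PathLtIn src tgt P a b

/-- Admissible cut `(V₁, V₂)` of the subgraph of `Γ` induced on `P`. -/
def AdmCutIn (src tgt : E → V) (P V1 V2 : Set V) : Prop :=
  V1 ⊆ P ∧ V2 ⊆ P ∧ Disjoint V1 V2 ∧ V1 ∪ V2 = P ∧ SetLtIn src tgt P V2 V1

/-- Isomorphism of oriented graphs. -/
def GIso {V1 E1 V2 E2 : Type*} (src1 tgt1 : E1 → V1) (src2 tgt2 : E2 → V2) : Prop :=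
  ∃ (f : V1 ≃ V2) (g : E1 ≃ E2),
    (∀ e, f (src1 e) = src2 (g e)) ∧ ∀ e, f (tgt1 e) = tgt2 (g e)

/-!
Edges of `Γ` inside a block collapse to points of `Γ/s` and the others become its edges, so a
directed path `v → u → w` with `w` in the block of `v` projects to a closed path through the
block of `u` in `Γ/s`. As `Γ/s` is cycle-free, that path is constant.
-/

theorem PathLe.contract {src tgt : E → V} (s : Setoid V) {a b : V}
    (h : PathLe src tgt a b) :
    PathLe (csrc src tgt s) (ctgt src tgt s) (Quotient.mk s a) (Quotient.mk s b) := by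
  refine Relation.ReflTransGen.lift' (Quotient.mk s) (fun x y ⟨e, hx, hy⟩ => ?_) _ _ h
  subst hx hy
  show Relation.ReflTransGen _ (Quotient.mk s (src e)) (Quotient.mk s (tgt e))
  by_cases hr : s.r (src e) (tgt e)
  · rw [Quotient.sound hr]
  · exact .single ⟨⟨e, hr⟩, rfl, rfl⟩

theorem CycleFree.eq_of_pathLe_of_pathLe {src tgt : E → V} (hΓ : CycleFree src tgt) {a b : V}
    (hab : PathLe src tgt a b) (hba : PathLe src tgt b a) : a = b := by
  rcases Relation.reflTransGen_iff_eq_or_transGen.mp hab with rfl | hab'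
  · rfl
  rcases Relation.reflTransGen_iff_eq_or_transGen.mp hba with rfl | hba'
  · rfl
  exact (hΓ a (hab'.trans hba')).elim

theorem stmt1_general (src tgt : E → V)
    (s : Setoid V)
    (hc : CycleFree (csrc src tgt s) (ctgt src tgt s)) :
    ∀ v u w : V, s.r v w → PathLe src tgt v u → PathLe src tgt u w → s.r v u := by
  intro v u w hvw hvu huw
  have hwv : Quotient.mk s w = Quotient.mk s v := Quotient.sound (s.symm hvw)
  have huv := hwv ▸ huw.contract s
  exact Quotient.exact (hc.eq_of_pathLe_of_pathLe (hvu.contract s) huv)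

/-- if `Γ` is cycle-free and the contraction along a covering
subgraph `s` is cycle-free, then every block of `s` is convex for the path order. -/
theorem stmt1 [Fintype V] [Fintype E] (src tgt : E → V) (hΓ : CycleFree src tgt)
    (s : Setoid V) (hs : CoveringSetoid src tgt s)
    (hc : CycleFree (csrc src tgt s) (ctgt src tgt s)) :
    ∀ v u w : V, s.r v w → PathLe src tgt v u → PathLe src tgt u w → s.r v u :=
  stmt1_general src tgt s hc
end

section
/- There exists a finite oriented cycle-free graph Γ and a covering subgraph γ of Γ such that every block of the associated partition is a convex connected subset of the vertex poset, yet the contracted graph Γ/γ contains a directed cycle. (I.e., the converse of the convexity criterion fails.) -/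
universe u v

variable {V : Type u} {E : Type v}

/-!
In the hexagon every vertex is a source or a sink, so every directed path has length at most
one. Hence the hexagon is cycle-free, and every partition is convex: a path `v ≤ u ≤ w` with
`v ≠ u` must have `u = w`. Contracting the edges `0 → 1`, `2 → 3`, `4 → 5` leaves the other
three edges `0 → 5`, `4 → 3`, `2 → 1`, which become the directed triangle
`{0,1} → {4,5} → {2,3} → {0,1}`.
-/

section OrientedGraph

variable {V : Type u} {E : Type v} {src tgt : E → V}

theorem Step.not_step (hst : ∀ e e', src e ≠ tgt e') {a b c : V}
    (hab : Step src tgt a b) : ¬ Step src tgt b c := by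
  rintro ⟨e', he', -⟩
  obtain ⟨e, -, he⟩ := hab
  exact hst e' e (he'.trans he.symm)

theorem PathLt.step (hst : ∀ e e', src e ≠ tgt e') {a b : V}
    (h : PathLt src tgt a b) : Step src tgt a b := by
  induction h with
  | single hab => exact hab
  | tail _ hbc hab => exact absurd hbc (hab.not_step hst)

theorem cycleFree_of_src_ne_tgt (hst : ∀ e e', src e ≠ tgt e') : CycleFree src tgt := by
  intro x hx
  obtain ⟨e, hs, ht⟩ := hx.step hst
  exact hst e e (hs.trans ht.symm)

/-- A nonempty path ends at a sink, so it cannot be continued. -/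
theorem convex_of_src_ne_tgt (hst : ∀ e e', src e ≠ tgt e') (s : Setoid V) (v u w : V)
    (hvw : s.r v w) (hvu : PathLe src tgt v u) (huw : PathLe src tgt u w) : s.r v u := by
  obtain rfl | ⟨x, -, hxu⟩ := hvu.cases_tail
  · exact Setoid.refl _
  obtain rfl | ⟨y, huy, -⟩ := huw.cases_head
  · exact hvw
  exact absurd huy (hxu.not_step hst)

theorem connSet_of_forall_ne_adj {P : Set V}
    (hP : ∀ a ∈ P, ∀ b ∈ P, a ≠ b → ∃ e, (src e = a ∧ tgt e = b) ∨ (src e = b ∧ tgt e = a)) :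
    ConnSet src tgt P := by
  intro a ha b hb
  obtain rfl | hab := eq_or_ne a b
  · rfl
  · exact .single ⟨ha, hb, hP a ha b hb hab⟩

theorem step_contract {s : Setoid V} (e : E) (he : ¬ s.r (src e) (tgt e)) {a b : V}
    (ha : s.r a (src e)) (hb : s.r (tgt e) b) :
    Step (csrc src tgt s) (ctgt src tgt s) (Quotient.mk s a) (Quotient.mk s b) :=
  ⟨⟨e, he⟩, Quotient.sound (s.symm' ha), Quotient.sound hb⟩

end OrientedGraph

namespace Hexagon

/-- The hexagon `0 → 1 ← 2 → 3 ← 4 → 5 ← 0`, numbered from `0`. -/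
def src : Fin 6 → Fin 6 := ![0, 2, 2, 4, 4, 0]
def tgt : Fin 6 → Fin 6 := ![1, 1, 3, 3, 5, 5]

def blocks : Setoid (Fin 6) := Setoid.ker fun v => v.val / 2

theorem blocks_r {a b : Fin 6} : blocks.r a b ↔ a.val / 2 = b.val / 2 := Iff.rfl

theorem src_ne_tgt : ∀ e e', src e ≠ tgt e' := by decide

theorem covering : CoveringSetoid src tgt blocks := by
  intro v
  refine connSet_of_forall_ne_adj ?_
  simp only [Set.mem_ofPred_eq, blocks_r]
  revert v
  decide

theorem not_cycleFree_contract : ¬ CycleFree (csrc src tgt blocks) (ctgt src tgt blocks) := by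
  have hcut : ∀ e : Fin 6, e.val % 2 = 1 → ¬ blocks.r (src e) (tgt e) := by
    simp only [blocks_r]
    decide
  have h04 := step_contract (s := blocks) (a := 0) (b := 4) 5 (hcut 5 rfl) rfl rfl
  have h42 := step_contract (s := blocks) (a := 4) (b := 2) 3 (hcut 3 rfl) rfl rfl
  have h20 := step_contract (s := blocks) (a := 2) (b := 0) 1 (hcut 1 rfl) rfl rfl
  exact fun h => h _ ((Relation.TransGen.single h04).tail h42 |>.tail h20)

end Hexagon

/-- the converse of the convexity criterion fails: there is a finite
cycle-free oriented graph and a covering subgraph with all blocks convex (and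
connected), whose contraction has a directed cycle. -/
theorem stmt2 : ∃ (V E : Type) (_ : Fintype V) (_ : Fintype E)
    (src tgt : E → V) (s : Setoid V),
    CycleFree src tgt ∧ CoveringSetoid src tgt s ∧
    (∀ v u w : V, s.r v w → PathLe src tgt v u → PathLe src tgt u w → s.r v u) ∧
    ¬ CycleFree (csrc src tgt s) (ctgt src tgt s) :=
  ⟨Fin 6, Fin 6, inferInstance, inferInstance, Hexagon.src, Hexagon.tgt, Hexagon.blocks,
    cycleFree_of_src_ne_tgt Hexagon.src_ne_tgt, Hexagon.covering,
    convex_of_src_ne_tgt Hexagon.src_ne_tgt Hexagon.blocks, Hexagon.not_cycleFree_contract⟩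
end

section
/- Let Γ be a finite oriented cycle-free graph. Then the admissible-cut coproduct Δ_c, defined on a graph by Δ_c(Γ) = Σ Γ(V_1) ⊗ Γ(V_2) over all ordered pairs (V_1, V_2) of disjoint subsets with V_1 ⊔ V_2 = V(Γ) and V_2 < V_1, is coassociative: (Δ_c ⊗ I)Δ_c(Γ) = (I ⊗ Δ_c)Δ_c(Γ), and both equal Σ Γ(V_1) ⊗ Γ(V_2) ⊗ Γ(V_3) over triples with V_3 < V_2 < V_1 (meaning V_3 < V_2, V_2 < V_1, and V_3 < V_1). -/
universe u v

variable {V : Type u} {E : Type v}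

/-! A cut `V₂ < V₁` of a cycle-free graph makes `V₁` an up-set and `V₂` a down-set of the path
order, so directed paths between vertices of either piece never leave it. Hence the path order of
`Γ(V₁)` and of `Γ(V₂)` is the restriction of that of `Γ`, and cutting `Γ` and then one of the two
pieces amounts to choosing a triple `V₃ < V₂ < V₁` partitioning the vertices. -/

section AdmissibleCuts

variable {src tgt : E → V}

def PathConvex (src tgt : E → V) (P : Set V) : Prop :=
  ∀ a ∈ P, ∀ b ∈ P, ∀ c, PathLt src tgt a c → PathLt src tgt c b → c ∈ P

lemma pathConvex_univ : PathConvex src tgt Set.univ :=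
  fun _ _ _ _ c _ _ => Set.mem_univ c

lemma PathLtIn.pathLt {P : Set V} {a b : V} (hab : PathLtIn src tgt P a b) :
    PathLt src tgt a b :=
  Relation.TransGen.mono (fun _ _ hs => hs.2.2) _ _ hab

lemma PathConvex.pathLtIn {P : Set V} (hP : PathConvex src tgt P) {a b : V}
    (ha : a ∈ P) (hb : b ∈ P) (hab : PathLt src tgt a b) : PathLtIn src tgt P a b := by
  induction hab with
  | single hs => exact .single ⟨ha, hb, hs⟩
  | @tail c d hac hcd ih =>
    have hc : c ∈ P := hP a ha d hb c hac (.single hcd)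
    exact (ih hc).tail ⟨hc, hb, hcd⟩

lemma PathConvex.setLtIn_iff {P A B : Set V} (hP : PathConvex src tgt P)
    (hA : A ⊆ P) (hB : B ⊆ P) : SetLtIn src tgt P A B ↔ SetLt src tgt A B := by
  constructor
  · intro hlt a ha b hb hcomp
    refine (hlt a ha b hb ?_).pathLt
    exact hcomp.imp (hP.pathLtIn (hA ha) (hB hb)) (hP.pathLtIn (hB hb) (hA ha))
  · intro hlt a ha b hb hcomp
    exact hP.pathLtIn (hA ha) (hB hb) (hlt a ha b hb (hcomp.imp PathLtIn.pathLt PathLtIn.pathLt))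

lemma setLtIn_univ_iff {A B : Set V} :
    SetLtIn src tgt Set.univ A B ↔ SetLt src tgt A B :=
  pathConvex_univ.setLtIn_iff (Set.subset_univ A) (Set.subset_univ B)

lemma admCutIn_univ_iff {V1 V2 : Set V} :
    AdmCutIn src tgt Set.univ V1 V2 ↔ AdmCut src tgt V1 V2 := by
  simp only [AdmCutIn, AdmCut, Set.subset_univ, true_and, setLtIn_univ_iff]

lemma SetLt.mono {A A' B B' : Set V} (hAB : SetLt src tgt A B) (hA : A' ⊆ A) (hB : B' ⊆ B) :
    SetLt src tgt A' B' :=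
  fun a ha b hb => hAB a (hA ha) b (hB hb)

lemma SetLt.union_left {A A' B : Set V} (hA : SetLt src tgt A B) (hA' : SetLt src tgt A' B) :
    SetLt src tgt (A ∪ A') B := by
  rintro a (ha | ha)
  exacts [hA a ha, hA' a ha]

lemma SetLt.union_right {A B B' : Set V} (hB : SetLt src tgt A B) (hB' : SetLt src tgt A B') :
    SetLt src tgt A (B ∪ B') := by
  rintro a ha b (hb | hb)
  exacts [hB a ha b hb, hB' a ha b hb]

lemma AdmCut.pathConvex_fst (h : CycleFree src tgt) {V1 V2 : Set V}
    (hcut : AdmCut src tgt V1 V2) : PathConvex src tgt V1 := by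
  intro a ha _ _ c hac _
  by_contra hc
  have hc2 : c ∈ V2 := Set.compl_subset_iff_union.mpr hcut.2.1 hc
  exact h a (hac.trans (hcut.2.2 c hc2 a ha (.inr hac)))

lemma AdmCut.pathConvex_snd (h : CycleFree src tgt) {V1 V2 : Set V}
    (hcut : AdmCut src tgt V1 V2) : PathConvex src tgt V2 := by
  intro _ _ b hb c _ hcb
  by_contra hc
  have hc1 : c ∈ V1 := Set.compl_subset_iff_union.mpr (Set.union_comm V1 V2 ▸ hcut.2.1) hc
  exact h b ((hcut.2.2 b hb c hc1 (.inr hcb)).trans hcb)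

def AdmTriple (src tgt : E → V) (V1 V2 V3 : Set V) : Prop :=
  Disjoint V1 V2 ∧ Disjoint V1 V3 ∧ Disjoint V2 V3 ∧ V1 ∪ V2 ∪ V3 = Set.univ ∧
    SetLt src tgt V3 V2 ∧ SetLt src tgt V2 V1 ∧ SetLt src tgt V3 V1

lemma admTriple_of_admCut_of_admCutIn_fst (h : CycleFree src tgt) {V1 V2 W1 W2 : Set V}
    (hcut : AdmCut src tgt V1 V2) (hsub : AdmCutIn src tgt V1 W1 W2) :
    AdmTriple src tgt W1 W2 V2 := by
  obtain ⟨hdis, hcov, hlt⟩ := hcut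
  obtain ⟨hW1, hW2, hdisW, hcovW, hltW⟩ := hsub
  refine ⟨hdisW, hdis.mono_left hW1, hdis.mono_left hW2, hcovW ▸ hcov,
    hlt.mono le_rfl hW2, ?_, hlt.mono le_rfl hW1⟩
  exact ((AdmCut.pathConvex_fst h ⟨hdis, hcov, hlt⟩).setLtIn_iff hW2 hW1).mp hltW

lemma admTriple_of_admCut_of_admCutIn_snd (h : CycleFree src tgt) {V1 V2 W1 W2 : Set V}
    (hcut : AdmCut src tgt V1 V2) (hsub : AdmCutIn src tgt V2 W1 W2) :
    AdmTriple src tgt V1 W1 W2 := by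
  obtain ⟨hdis, hcov, hlt⟩ := hcut
  obtain ⟨hW1, hW2, hdisW, hcovW, hltW⟩ := hsub
  refine ⟨hdis.mono_right hW1, hdis.mono_right hW2, hdisW, ?_, ?_,
    hlt.mono hW1 le_rfl, hlt.mono hW2 le_rfl⟩
  · rw [Set.union_assoc, hcovW, hcov]
  · exact ((AdmCut.pathConvex_snd h ⟨hdis, hcov, hlt⟩).setLtIn_iff hW2 hW1).mp hltW

lemma AdmTriple.admCut_union_left {V1 V2 V3 : Set V} (ht : AdmTriple src tgt V1 V2 V3) :
    AdmCut src tgt (V1 ∪ V2) V3 :=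
  ⟨Set.disjoint_union_left.mpr ⟨ht.2.1, ht.2.2.1⟩, ht.2.2.2.1,
    ht.2.2.2.2.2.2.union_right ht.2.2.2.2.1⟩

lemma AdmTriple.admCut_union_right {V1 V2 V3 : Set V} (ht : AdmTriple src tgt V1 V2 V3) :
    AdmCut src tgt V1 (V2 ∪ V3) :=
  ⟨Set.disjoint_union_right.mpr ⟨ht.1, ht.2.1⟩, Set.union_assoc V1 V2 V3 ▸ ht.2.2.2.1,
    ht.2.2.2.2.2.1.union_left ht.2.2.2.2.2.2⟩

lemma AdmTriple.admCutIn_union_left (h : CycleFree src tgt) {V1 V2 V3 : Set V}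
    (ht : AdmTriple src tgt V1 V2 V3) : AdmCutIn src tgt (V1 ∪ V2) V1 V2 :=
  ⟨Set.subset_union_left, Set.subset_union_right, ht.1, rfl,
    ((ht.admCut_union_left.pathConvex_fst h).setLtIn_iff Set.subset_union_right
      Set.subset_union_left).mpr ht.2.2.2.2.2.1⟩

lemma AdmTriple.admCutIn_union_right (h : CycleFree src tgt) {V1 V2 V3 : Set V}
    (ht : AdmTriple src tgt V1 V2 V3) : AdmCutIn src tgt (V2 ∪ V3) V2 V3 :=
  ⟨Set.subset_union_left, Set.subset_union_right, ht.2.2.1, rfl,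
    ((ht.admCut_union_right.pathConvex_snd h).setLtIn_iff Set.subset_union_right
      Set.subset_union_left).mpr ht.2.2.2.2.1⟩

/-- The index set of `(Δ_c ⊗ I) Δ_c`: a cut `(V₁, V₂)` of `Γ` followed by a cut `(W₁, W₂)`
of `Γ(V₁)`. -/
abbrev LeftIteratedCut (src tgt : E → V) : Type u :=
  {p : (Set V × Set V) × (Set V × Set V) //
    AdmCutIn src tgt Set.univ p.1.1 p.1.2 ∧ AdmCutIn src tgt p.1.1 p.2.1 p.2.2}

/-- The index set of `(I ⊗ Δ_c) Δ_c`: a cut `(V₁, V₂)` of `Γ` followed by a cut `(W₁, W₂)`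
of `Γ(V₂)`. -/
abbrev RightIteratedCut (src tgt : E → V) : Type u :=
  {p : (Set V × Set V) × (Set V × Set V) //
    AdmCutIn src tgt Set.univ p.1.1 p.1.2 ∧ AdmCutIn src tgt p.1.2 p.2.1 p.2.2}

abbrev AdmTriples (src tgt : E → V) : Type u :=
  {t : Set V × Set V × Set V // AdmTriple src tgt t.1 t.2.1 t.2.2}

def leftIteratedCutEquiv (h : CycleFree src tgt) :
    LeftIteratedCut src tgt ≃ AdmTriples src tgt where
  toFun p := ⟨(p.1.2.1, p.1.2.2, p.1.1.2),
    admTriple_of_admCut_of_admCutIn_fst h (admCutIn_univ_iff.mp p.2.1) p.2.2⟩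
  invFun t := ⟨((t.1.1 ∪ t.1.2.1, t.1.2.2), (t.1.1, t.1.2.1)),
    admCutIn_univ_iff.mpr t.2.admCut_union_left, t.2.admCutIn_union_left h⟩
  left_inv p := Subtype.ext (Prod.ext (Prod.ext p.2.2.2.2.2.1 rfl) rfl)
  right_inv _ := rfl

def rightIteratedCutEquiv (h : CycleFree src tgt) :
    RightIteratedCut src tgt ≃ AdmTriples src tgt where
  toFun p := ⟨(p.1.1.1, p.1.2.1, p.1.2.2),
    admTriple_of_admCut_of_admCutIn_snd h (admCutIn_univ_iff.mp p.2.1) p.2.2⟩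
  invFun t := ⟨((t.1.1, t.1.2.1 ∪ t.1.2.2), (t.1.2.1, t.1.2.2)),
    admCutIn_univ_iff.mpr t.2.admCut_union_right, t.2.admCutIn_union_right h⟩
  left_inv p := Subtype.ext (Prod.ext (Prod.ext rfl p.2.2.2.2.2.1) rfl)
  right_inv _ := rfl

end AdmissibleCuts

theorem stmt10_general (src tgt : E → V) (h : CycleFree src tgt) :
    ∃ (eL : {p : (Set V × Set V) × (Set V × Set V) //
        AdmCutIn src tgt Set.univ p.1.1 p.1.2 ∧
        AdmCutIn src tgt p.1.1 p.2.1 p.2.2} ≃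
      {t : Set V × Set V × Set V //
        Disjoint t.1 t.2.1 ∧ Disjoint t.1 t.2.2 ∧ Disjoint t.2.1 t.2.2 ∧
        t.1 ∪ t.2.1 ∪ t.2.2 = Set.univ ∧
        SetLt src tgt t.2.2 t.2.1 ∧ SetLt src tgt t.2.1 t.1 ∧
        SetLt src tgt t.2.2 t.1})
      (eR : {p : (Set V × Set V) × (Set V × Set V) //
        AdmCutIn src tgt Set.univ p.1.1 p.1.2 ∧
        AdmCutIn src tgt p.1.2 p.2.1 p.2.2} ≃
      {t : Set V × Set V × Set V //
        Disjoint t.1 t.2.1 ∧ Disjoint t.1 t.2.2 ∧ Disjoint t.2.1 t.2.2 ∧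
        t.1 ∪ t.2.1 ∪ t.2.2 = Set.univ ∧
        SetLt src tgt t.2.2 t.2.1 ∧ SetLt src tgt t.2.1 t.1 ∧
        SetLt src tgt t.2.2 t.1}),
      (∀ p, (eL p).1 = (p.1.2.1, p.1.2.2, p.1.1.2)) ∧
      (∀ p, (eR p).1 = (p.1.1.1, p.1.2.1, p.1.2.2)) :=
  ⟨leftIteratedCutEquiv h, rightIteratedCutEquiv h, fun _ => rfl, fun _ => rfl⟩

/-- coassociativity of the admissible-cut coproduct `Δ_c`, stated as
bijections between the index sets of the two iterated sums and the set of triples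
`(V₁,V₂,V₃)` with `V₃ < V₂ < V₁` (meaning `V₃ < V₂`, `V₂ < V₁` and `V₃ < V₁`),
preserving the resulting tensors (i.e. the vertex sets of the induced subgraphs). -/
theorem stmt10 [Fintype V] [Fintype E] (src tgt : E → V) (h : CycleFree src tgt) :
    ∃ (eL : {p : (Set V × Set V) × (Set V × Set V) //
        AdmCutIn src tgt Set.univ p.1.1 p.1.2 ∧
        AdmCutIn src tgt p.1.1 p.2.1 p.2.2} ≃
      {t : Set V × Set V × Set V //
        Disjoint t.1 t.2.1 ∧ Disjoint t.1 t.2.2 ∧ Disjoint t.2.1 t.2.2 ∧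
        t.1 ∪ t.2.1 ∪ t.2.2 = Set.univ ∧
        SetLt src tgt t.2.2 t.2.1 ∧ SetLt src tgt t.2.1 t.1 ∧
        SetLt src tgt t.2.2 t.1})
      (eR : {p : (Set V × Set V) × (Set V × Set V) //
        AdmCutIn src tgt Set.univ p.1.1 p.1.2 ∧
        AdmCutIn src tgt p.1.2 p.2.1 p.2.2} ≃
      {t : Set V × Set V × Set V //
        Disjoint t.1 t.2.1 ∧ Disjoint t.1 t.2.2 ∧ Disjoint t.2.1 t.2.2 ∧
        t.1 ∪ t.2.1 ∪ t.2.2 = Set.univ ∧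
        SetLt src tgt t.2.2 t.2.1 ∧ SetLt src tgt t.2.1 t.1 ∧
        SetLt src tgt t.2.2 t.1}),
      (∀ p, (eL p).1 = (p.1.2.1, p.1.2.2, p.1.1.2)) ∧
      (∀ p, (eR p).1 = (p.1.1.1, p.1.2.1, p.1.2.2)) :=
  stmt10_general src tgt h
end

section
/- Let Γ be a finite oriented cycle-free graph, γ a poset-compatible covering subgraph (i.e. Γ/γ is cycle-free), and V(Γ/γ) = U_1 ⊔ U_2 an admissible cut of the contracted graph (U_2 < U_1 in the path-order of Γ/γ). Let V_i ⊆ V(Γ) be the union of the blocks of γ belonging to U_i. Then V(Γ) = V_1 ⊔ V_2 is an admissible cut of Γ, i.e. V_2 < V_1 in the path-order of Γ. -/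
universe u v

variable {V : Type u} {E : Type v}

/-!
Every edge of `Γ` either lies inside a block of `γ` or is an edge of `Γ/γ`, so a directed path
`b → a` in `Γ` projects to a possibly empty directed path between the blocks of `b` and `a`.
If `a ∈ V₂` and `b ∈ V₁` these blocks are distinct, so `[b] < [a]` in `Γ/γ`; the cut gives
`[a] < [b]` as well, a cycle in `Γ/γ`. Hence every comparable pair is ordered as `a < b`.
-/

section Pullback

variable {V' E' : Type*} {src tgt : E → V} {src' tgt' : E' → V'}

theorem admCut_preimage {f : V → V'}
    (hf : ∀ ⦃x y⦄, PathLt src tgt x y → PathLe src' tgt' (f x) (f y))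
    (hacyc : CycleFree src' tgt') {U1 U2 : Set V'} (hcut : AdmCut src' tgt' U1 U2) :
    AdmCut src tgt (f ⁻¹' U1) (f ⁻¹' U2) := by
  obtain ⟨hdisj, hcover, hlt⟩ := hcut
  refine ⟨hdisj.preimage f, by rw [← Set.preimage_union, hcover, Set.preimage_univ], ?_⟩
  rintro a ha b hb (hab | hba)
  · exact hab
  have hba' : PathLt src' tgt' (f b) (f a) :=
    (Relation.reflTransGen_iff_eq_or_transGen.mp (hf hba)).resolve_left
      (hdisj.ne_of_mem hb ha).symm
  exact (hacyc _ ((hlt _ ha _ hb (Or.inr hba')).trans hba')).elim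

end Pullback

section Contraction

variable {src tgt : E → V} (s : Setoid V)

theorem Step.pathLe_contract {x y : V} (hxy : Step src tgt x y) :
    PathLe (csrc src tgt s) (ctgt src tgt s) (Quotient.mk s x) (Quotient.mk s y) := by
  obtain ⟨e, rfl, rfl⟩ := hxy
  by_cases hr : s.r (src e) (tgt e)
  · rw [Quotient.sound hr]
    exact Relation.ReflTransGen.refl
  · exact Relation.ReflTransGen.single ⟨⟨e, hr⟩, rfl, rfl⟩

theorem PathLt.pathLe_contract {x y : V} (hxy : PathLt src tgt x y) :
    PathLe (csrc src tgt s) (ctgt src tgt s) (Quotient.mk s x) (Quotient.mk s y) := by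
  induction hxy with
  | single hstep => exact hstep.pathLe_contract s
  | tail _ hstep ih => exact ih.trans (hstep.pathLe_contract s)

end Contraction

theorem stmt12_general (src tgt : E → V)
    (s : Setoid V)
    (hpc : CycleFree (csrc src tgt s) (ctgt src tgt s))
    (U1 U2 : Set (Quotient s))
    (hcut : AdmCut (csrc src tgt s) (ctgt src tgt s) U1 U2) :
    AdmCut src tgt {v | Quotient.mk s v ∈ U1} {v | Quotient.mk s v ∈ U2} :=
  admCut_preimage (fun _ _ hxy => hxy.pathLe_contract s) hpc hcut

/-- pulling back an admissible cut of `Γ/γ` along a poset-compatible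
covering subgraph `γ` gives an admissible cut of `Γ`. -/
theorem stmt12 [Fintype V] [Fintype E] (src tgt : E → V) (h : CycleFree src tgt)
    (s : Setoid V) (hs : CoveringSetoid src tgt s)
    (hpc : CycleFree (csrc src tgt s) (ctgt src tgt s))
    (U1 U2 : Set (Quotient s))
    (hcut : AdmCut (csrc src tgt s) (ctgt src tgt s) U1 U2) :
    AdmCut src tgt {v | Quotient.mk s v ∈ U1} {v | Quotient.mk s v ∈ U2} :=
  stmt12_general src tgt s hpc U1 U2 hcut
end

section
/- Let Γ be a finite oriented cycle-free graph. There is a bijection between: (a) pairs (γ, (U_1,U_2)) where γ is a poset-compatible covering subgraph of Γ and (U_1,U_2) is an admissible cut of Γ/γ; and (b) pairs ((V_1,V_2), (γ', γ'')) where (V_1,V_2) is an admissible cut of Γ, γ' is a poset-compatible covering subgraph of Γ(V_1), and γ'' is a poset-compatible covering subgraph of Γ(V_2). Under this bijection, γ corresponds to the union γ'⊔γ'', V_i is the union of blocks of γ in U_i, and (Γ/γ)(U_i) = Γ(V_i)/(γ restricted to V_i). -/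
/-!
In a cycle-free graph an admissible cut `(V₁, V₂)` is just a partition with no edge from `V₁`
to `V₂`. A covering `γ` of `Γ` with a cut `(U₁, U₂)` of `Γ/γ` is restricted to the preimages
`Vᵢ` of the `Uᵢ`; conversely coverings `γ'`, `γ''` of `Γ(V₁)`, `Γ(V₂)` are glued to `γ' ⊔ γ''`
and the cut is taken along the images of the `Vᵢ`. Since each `Vᵢ` is a union of blocks,
`(Γ/γ)(Uᵢ) ≅ Γ(Vᵢ)/γ⁽ⁱ⁾`, which transfers cycle-freeness in both directions; for the glued
covering, a cycle of `Γ/γ` that starts in the upper set `U₁` stays in it, and one that starts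
outside never enters it, so it is a cycle of `(Γ/γ)(U₁)` or of `(Γ/γ)(U₂)`.
-/

universe u v

variable {V : Type u} {E : Type v}

section Paths

open Set

theorem GIso.symm {V₁ E₁ V₂ E₂ : Type*} {s₁ t₁ : E₁ → V₁} {s₂ t₂ : E₂ → V₂}
    (h : GIso s₁ t₁ s₂ t₂) : GIso s₂ t₂ s₁ t₁ := by
  obtain ⟨f, g, hs, ht⟩ := h
  refine ⟨f.symm, g.symm, fun e => ?_, fun e => ?_⟩
  · rw [f.symm_apply_eq, hs, g.apply_symm_apply]
  · rw [f.symm_apply_eq, ht, g.apply_symm_apply]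

theorem CycleFree.comap {V₁ E₁ V₂ E₂ : Type*} {s₁ t₁ : E₁ → V₁} {s₂ t₂ : E₂ → V₂}
    (h : CycleFree s₂ t₂) (f : V₁ → V₂) (hf : ∀ a b, Step s₁ t₁ a b → Step s₂ t₂ (f a) (f b)) :
    CycleFree s₁ t₁ :=
  fun x hx => h (f x) (hx.lift f hf)

theorem CycleFree.of_gIso {V₁ E₁ V₂ E₂ : Type*} {s₁ t₁ : E₁ → V₁} {s₂ t₂ : E₂ → V₂}
    (h : CycleFree s₂ t₂) (i : GIso s₁ t₁ s₂ t₂) : CycleFree s₁ t₁ := by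
  obtain ⟨f, g, hs, ht⟩ := i
  refine h.comap f ?_
  rintro _ _ ⟨e, rfl, rfl⟩
  exact ⟨g e, (hs e).symm, (ht e).symm⟩

variable {src tgt : E → V}

theorem CycleFree.induced (h : CycleFree src tgt) (P : Set V) :
    CycleFree (isrc src tgt P) (itgt src tgt P) :=
  h.comap Subtype.val (by rintro _ _ ⟨e, rfl, rfl⟩; exact ⟨e.1, rfl, rfl⟩)

theorem PathLtIn.induced {P : Set V} {x y : V} (hxy : PathLtIn src tgt P x y) :
    ∃ (hx : x ∈ P) (hy : y ∈ P), PathLt (isrc src tgt P) (itgt src tgt P) ⟨x, hx⟩ ⟨y, hy⟩ := by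
  induction hxy with
  | single hs =>
      obtain ⟨hx, hy, e, rfl, rfl⟩ := hs
      exact ⟨hx, hy, .single ⟨⟨e, hx, hy⟩, rfl, rfl⟩⟩
  | tail _ hs ih =>
      obtain ⟨hx, _, hp⟩ := ih
      obtain ⟨hb, hc, e, rfl, rfl⟩ := hs
      exact ⟨hx, hc, hp.tail ⟨⟨e, hb, hc⟩, rfl, rfl⟩⟩

theorem PathLt.pathLtIn {P : Set V} {x y : V} (hxy : PathLt src tgt x y)
    (hP : ∀ z, PathLe src tgt x z → PathLe src tgt z y → z ∈ P) : PathLtIn src tgt P x y := by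
  induction hxy with
  | single hs => exact .single ⟨hP _ .refl (.single hs), hP _ (.single hs) .refl, hs⟩
  | tail hxb hs ih =>
      exact (ih fun z hxz hzb => hP z hxz (hzb.tail hs)).tail
        ⟨hP _ hxb.to_reflTransGen (.single hs), hP _ (hxb.tail hs).to_reflTransGen .refl, hs⟩

def IsForwardClosed (src tgt : E → V) (A : Set V) : Prop :=
  ∀ e, src e ∈ A → tgt e ∈ A

theorem IsForwardClosed.mem_of_pathLe {A : Set V} (hA : IsForwardClosed src tgt A) {x y : V}
    (hxy : PathLe src tgt x y) (hx : x ∈ A) : y ∈ A := by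
  induction hxy with
  | refl => exact hx
  | tail _ hs ih =>
      obtain ⟨e, rfl, rfl⟩ := hs
      exact hA e ih

theorem CycleFree.of_isForwardClosed {A B : Set V} (hA : IsForwardClosed src tgt A)
    (hAB : A ∪ B = univ) (hcA : CycleFree (isrc src tgt A) (itgt src tgt A))
    (hcB : CycleFree (isrc src tgt B) (itgt src tgt B)) : CycleFree src tgt := by
  intro x hx
  by_cases hxA : x ∈ A
  · obtain ⟨_, _, hc⟩ := (hx.pathLtIn fun z hxz _ => hA.mem_of_pathLe hxz hxA).induced
    exact hcA _ hc
  · have hB : ∀ z, PathLe src tgt z x → z ∈ B := fun z hzx =>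
      (eq_univ_iff_forall.1 hAB z).resolve_left fun hz => hxA (hA.mem_of_pathLe hzx hz)
    obtain ⟨_, _, hc⟩ := (hx.pathLtIn fun z _ hzx => hB z hzx).induced
    exact hcB _ hc

theorem AdmCut.isForwardClosed {V₁ V₂ : Set V} (hc : AdmCut src tgt V₁ V₂)
    (h : CycleFree src tgt) : IsForwardClosed src tgt V₁ := by
  intro e he
  by_contra hne
  have hs : PathLt src tgt (src e) (tgt e) := .single ⟨e, rfl, rfl⟩
  have h₂ : tgt e ∈ V₂ := (eq_univ_iff_forall.1 hc.2.1 (tgt e)).resolve_left hne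
  exact h _ (hs.trans (hc.2.2 _ h₂ _ he (.inr hs)))

theorem admCut_of_isForwardClosed {V₁ V₂ : Set V} (hd : Disjoint V₁ V₂) (hu : V₁ ∪ V₂ = univ)
    (hf : IsForwardClosed src tgt V₁) : AdmCut src tgt V₁ V₂ :=
  ⟨hd, hu, fun _ ha _ hb hab =>
    hab.resolve_right fun hba => hd.notMem_of_mem_left (hf.mem_of_pathLe hba.to_reflTransGen hb) ha⟩

end Paths

section Connectivity

open Relation

variable {src tgt : E → V}

theorem ConnSet.image_val {P : Set V} {B : Set P}
    (hB : ConnSet (isrc src tgt P) (itgt src tgt P) B) : ConnSet src tgt (Subtype.val '' B) := by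
  rintro _ ⟨v, hv, rfl⟩ _ ⟨w, hw, rfl⟩
  refine (hB v hv w hw).lift Subtype.val ?_
  rintro a b ⟨ha, hb, e, he⟩
  refine ⟨⟨a, ha, rfl⟩, ⟨b, hb, rfl⟩, e.1, ?_⟩
  rcases he with ⟨rfl, rfl⟩ | ⟨rfl, rfl⟩
  exacts [.inl ⟨rfl, rfl⟩, .inr ⟨rfl, rfl⟩]

theorem ConnSet.preimage_val {P C : Set V} (hC : ConnSet src tgt C) (hCP : C ⊆ P) :
    ConnSet (isrc src tgt P) (itgt src tgt P) (Subtype.val ⁻¹' C) := by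
  intro v hv w hw
  suffices ∀ y, ReflTransGen (UStepIn src tgt C) v.1 y → ∀ hy : y ∈ P,
      ReflTransGen (UStepIn (isrc src tgt P) (itgt src tgt P) (Subtype.val ⁻¹' C)) v ⟨y, hy⟩ from
    this w.1 (hC v.1 hv w.1 hw) w.2
  intro y hvy
  induction hvy with
  | refl => exact fun _ => .refl
  | tail _ hs ih =>
      obtain ⟨hb, hc, e, he⟩ := hs
      intro hy
      refine (ih (hCP hb)).tail ⟨hb, hc, ?_⟩
      rcases he with ⟨rfl, rfl⟩ | ⟨rfl, rfl⟩
      · exact ⟨⟨e, hCP hb, hy⟩, .inl ⟨rfl, rfl⟩⟩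
      · exact ⟨⟨e, hy, hCP hb⟩, .inr ⟨rfl, rfl⟩⟩

end Connectivity

namespace Setoid

open Set

def Saturates (s : Setoid V) (P : Set V) : Prop :=
  ∀ ⦃v w⦄, s v w → v ∈ P → w ∈ P

theorem saturates_preimage_mk (s : Setoid V) (U : Set (Quotient s)) :
    s.Saturates (Quotient.mk s ⁻¹' U) :=
  fun _ _ hvw hv => by rwa [mem_preimage, ← Quotient.sound hvw]

theorem Saturates.mk_mem_image_mk_iff {s : Setoid V} {P : Set V} (hP : s.Saturates P)
    {v : V} : Quotient.mk s v ∈ Quotient.mk s '' P ↔ v ∈ P :=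
  ⟨fun ⟨_, hw, hwv⟩ => hP (Quotient.exact hwv) hw, fun hv => ⟨_, hv, rfl⟩⟩

theorem Saturates.preimage_image_mk {s : Setoid V} {P : Set V} (hP : s.Saturates P) :
    Quotient.mk s ⁻¹' (Quotient.mk s '' P) = P :=
  Set.ext fun _ => hP.mk_mem_image_mk_iff

theorem Saturates.disjoint_image_mk {s : Setoid V} {P Q : Set V} (hP : s.Saturates P)
    (hd : Disjoint P Q) : Disjoint (Quotient.mk s '' P) (Quotient.mk s '' Q) := by
  rw [Set.disjoint_left]
  rintro _ ⟨v, hv, rfl⟩ ⟨w, hw, hwv⟩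
  exact hd.notMem_of_mem_left (hP (Quotient.exact hwv.symm) hv) hw

variable {V₁ V₂ : Set V}

def glue (hd : Disjoint V₁ V₂) (hu : V₁ ∪ V₂ = univ) (s₁ : Setoid V₁) (s₂ : Setoid V₂) :
    Setoid V where
  r v w := (∃ (hv : v ∈ V₁) (hw : w ∈ V₁), s₁ ⟨v, hv⟩ ⟨w, hw⟩) ∨
    (∃ (hv : v ∈ V₂) (hw : w ∈ V₂), s₂ ⟨v, hv⟩ ⟨w, hw⟩)
  iseqv := by
    refine ⟨fun v => ?_, ?_, ?_⟩
    · rcases eq_univ_iff_forall.1 hu v with hv | hv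
      exacts [.inl ⟨hv, hv, s₁.refl' _⟩, .inr ⟨hv, hv, s₂.refl' _⟩]
    · rintro v w (⟨hv, hw, h⟩ | ⟨hv, hw, h⟩)
      exacts [.inl ⟨hw, hv, s₁.symm' h⟩, .inr ⟨hw, hv, s₂.symm' h⟩]
    · rintro v w x (⟨hv, hw, h⟩ | ⟨hv, hw, h⟩) (⟨hw', hx, h'⟩ | ⟨hw', hx, h'⟩)
      · exact .inl ⟨hv, hx, s₁.trans' h h'⟩
      · exact absurd hw' (hd.notMem_of_mem_left hw)
      · exact absurd hw (hd.notMem_of_mem_left hw')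
      · exact .inr ⟨hv, hx, s₂.trans' h h'⟩

variable (hd : Disjoint V₁ V₂) (hu : V₁ ∪ V₂ = univ) (s₁ : Setoid V₁) (s₂ : Setoid V₂)

theorem glue_iff_left {v w : V} (hv : v ∈ V₁) (hw : w ∈ V₁) :
    glue hd hu s₁ s₂ v w ↔ s₁ ⟨v, hv⟩ ⟨w, hw⟩ :=
  ⟨fun h => h.elim (fun ⟨_, _, h⟩ => h) fun ⟨hv', _, _⟩ => absurd hv' (hd.notMem_of_mem_left hv),
    fun h => .inl ⟨hv, hw, h⟩⟩

theorem glue_iff_right {v w : V} (hv : v ∈ V₂) (hw : w ∈ V₂) :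
    glue hd hu s₁ s₂ v w ↔ s₂ ⟨v, hv⟩ ⟨w, hw⟩ :=
  ⟨fun h => h.elim (fun ⟨hv', _, _⟩ => absurd hv (hd.notMem_of_mem_left hv')) fun ⟨_, _, h⟩ => h,
    fun h => .inr ⟨hv, hw, h⟩⟩

theorem saturates_glue_left : (glue hd hu s₁ s₂).Saturates V₁ := by
  rintro v w (⟨_, hw, _⟩ | ⟨hv₂, _, _⟩) hv
  exacts [hw, absurd hv₂ (hd.notMem_of_mem_left hv)]

theorem saturates_glue_right : (glue hd hu s₁ s₂).Saturates V₂ := by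
  rintro v w (⟨hv₁, _, _⟩ | ⟨_, hw, _⟩) hv
  exacts [absurd hv (hd.notMem_of_mem_left hv₁), hw]

theorem comap_glue_left : (glue hd hu s₁ s₂).comap Subtype.val = s₁ :=
  Setoid.ext fun a b => glue_iff_left hd hu s₁ s₂ a.2 b.2

theorem comap_glue_right : (glue hd hu s₁ s₂).comap Subtype.val = s₂ :=
  Setoid.ext fun a b => glue_iff_right hd hu s₁ s₂ a.2 b.2

theorem setOf_glue_left {v : V} (hv : v ∈ V₁) :
    {w | glue hd hu s₁ s₂ v w} = Subtype.val '' {w | s₁ ⟨v, hv⟩ w} := by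
  ext w
  refine ⟨fun (h : glue hd hu s₁ s₂ v w) => ?_, ?_⟩
  · exact ⟨⟨w, saturates_glue_left hd hu s₁ s₂ h hv⟩, (glue_iff_left hd hu s₁ s₂ hv _).1 h, rfl⟩
  · rintro ⟨w, hw, rfl⟩
    exact (glue_iff_left hd hu s₁ s₂ hv w.2).2 hw

theorem setOf_glue_right {v : V} (hv : v ∈ V₂) :
    {w | glue hd hu s₁ s₂ v w} = Subtype.val '' {w | s₂ ⟨v, hv⟩ w} := by
  ext w
  refine ⟨fun (h : glue hd hu s₁ s₂ v w) => ?_, ?_⟩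
  · exact ⟨⟨w, saturates_glue_right hd hu s₁ s₂ h hv⟩, (glue_iff_right hd hu s₁ s₂ hv _).1 h, rfl⟩
  · rintro ⟨w, hw, rfl⟩
    exact (glue_iff_right hd hu s₁ s₂ hv w.2).2 hw

theorem glue_comap_val {s : Setoid V} (h₁ : s.Saturates V₁) (h₂ : s.Saturates V₂) :
    glue hd hu (s.comap Subtype.val) (s.comap Subtype.val) = s := by
  refine Setoid.ext fun v w => ⟨?_, fun h => ?_⟩
  · rintro (⟨_, _, h⟩ | ⟨_, _, h⟩) <;> exact h
  · rcases eq_univ_iff_forall.1 hu v with hv | hv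
    exacts [.inl ⟨hv, h₁ h hv, h⟩, .inr ⟨hv, h₂ h hv, h⟩]

end Setoid

section Contraction

open Set

theorem gIso_induced_contract (src tgt : E → V) {s : Setoid V} {P : Set V}
    (hP : s.Saturates P) :
    GIso (isrc (csrc src tgt s) (ctgt src tgt s) (Quotient.mk s '' P))
      (itgt (csrc src tgt s) (ctgt src tgt s) (Quotient.mk s '' P))
      (csrc (isrc src tgt P) (itgt src tgt P) (s.comap Subtype.val))
      (ctgt (isrc src tgt P) (itgt src tgt P) (s.comap Subtype.val)) := by
  let f : Quotient (s.comap Subtype.val) ≃ Quotient.mk s '' P :=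
    (Setoid.comapQuotientEquiv _ _).trans
      (Equiv.setCongr (by rw [range_comp, Subtype.range_coe]))
  let g : IEdge (csrc src tgt s) (ctgt src tgt s) (Quotient.mk s '' P) ≃
      CEdge (isrc src tgt P) (itgt src tgt P) (s.comap Subtype.val) :=
    { toFun e := ⟨⟨e.1.1, hP.mk_mem_image_mk_iff.1 e.2.1, hP.mk_mem_image_mk_iff.1 e.2.2⟩, e.1.2⟩
      invFun e := ⟨⟨e.1.1, e.2⟩, hP.mk_mem_image_mk_iff.2 e.1.2.1, hP.mk_mem_image_mk_iff.2 e.1.2.2⟩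
      left_inv _ := rfl
      right_inv _ := rfl }
  exact ⟨f.symm, g, fun _ => f.symm_apply_eq.2 rfl, fun _ => f.symm_apply_eq.2 rfl⟩

theorem gIso_contract_glue_left (src tgt : E → V) {V₁ V₂ : Set V} (hd : Disjoint V₁ V₂)
    (hu : V₁ ∪ V₂ = univ) (s₁ : Setoid V₁) (s₂ : Setoid V₂) :
    GIso (isrc (csrc src tgt (s₁.glue hd hu s₂)) (ctgt src tgt (s₁.glue hd hu s₂))
        (Quotient.mk _ '' V₁))
      (itgt (csrc src tgt (s₁.glue hd hu s₂)) (ctgt src tgt (s₁.glue hd hu s₂))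
        (Quotient.mk _ '' V₁))
      (csrc (isrc src tgt V₁) (itgt src tgt V₁) s₁)
      (ctgt (isrc src tgt V₁) (itgt src tgt V₁) s₁) := by
  have h := gIso_induced_contract src tgt (Setoid.saturates_glue_left hd hu s₁ s₂)
  rwa [Setoid.comap_glue_left hd hu s₁ s₂] at h

theorem gIso_contract_glue_right (src tgt : E → V) {V₁ V₂ : Set V} (hd : Disjoint V₁ V₂)
    (hu : V₁ ∪ V₂ = univ) (s₁ : Setoid V₁) (s₂ : Setoid V₂) :
    GIso (isrc (csrc src tgt (s₁.glue hd hu s₂)) (ctgt src tgt (s₁.glue hd hu s₂))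
        (Quotient.mk _ '' V₂))
      (itgt (csrc src tgt (s₁.glue hd hu s₂)) (ctgt src tgt (s₁.glue hd hu s₂))
        (Quotient.mk _ '' V₂))
      (csrc (isrc src tgt V₂) (itgt src tgt V₂) s₂)
      (ctgt (isrc src tgt V₂) (itgt src tgt V₂) s₂) := by
  have h := gIso_induced_contract src tgt (Setoid.saturates_glue_right hd hu s₁ s₂)
  rwa [Setoid.comap_glue_right hd hu s₁ s₂] at h

variable {src tgt : E → V} {s : Setoid V}

theorem CoveringSetoid.comap_val {P : Set V}
    (hs : CoveringSetoid src tgt s) (hP : s.Saturates P) :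
    CoveringSetoid (isrc src tgt P) (itgt src tgt P) (s.comap Subtype.val) :=
  fun v => (hs v.1).preimage_val fun _ hw => hP hw v.2

theorem CoveringSetoid.glue {V₁ V₂ : Set V} (hd : Disjoint V₁ V₂)
    (hu : V₁ ∪ V₂ = univ) {s₁ : Setoid V₁} {s₂ : Setoid V₂}
    (h₁ : CoveringSetoid (isrc src tgt V₁) (itgt src tgt V₁) s₁)
    (h₂ : CoveringSetoid (isrc src tgt V₂) (itgt src tgt V₂) s₂) :
    CoveringSetoid src tgt (Setoid.glue hd hu s₁ s₂) := by
  intro v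
  rcases eq_univ_iff_forall.1 hu v with hv | hv
  · rw [Setoid.setOf_glue_left hd hu s₁ s₂ hv]
    exact (h₁ _).image_val
  · rw [Setoid.setOf_glue_right hd hu s₁ s₂ hv]
    exact (h₂ _).image_val

theorem IsForwardClosed.image_mk {A : Set V} (hA : IsForwardClosed src tgt A)
    (hs : s.Saturates A) : IsForwardClosed (csrc src tgt s) (ctgt src tgt s) (Quotient.mk s '' A) :=
  fun e he => ⟨_, hA e.1 (hs.mk_mem_image_mk_iff.1 he), rfl⟩

theorem IsForwardClosed.preimage_mk {U : Set (Quotient s)}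
    (hU : IsForwardClosed (csrc src tgt s) (ctgt src tgt s) U) :
    IsForwardClosed src tgt (Quotient.mk s ⁻¹' U) := by
  intro e he
  by_cases hst : s (src e) (tgt e)
  · exact s.saturates_preimage_mk U hst he
  · exact hU ⟨e, hst⟩ he

theorem image_mk_union_eq_univ {V₁ V₂ : Set V} (hu : V₁ ∪ V₂ = univ) :
    Quotient.mk s '' V₁ ∪ Quotient.mk s '' V₂ = univ := by
  rw [← image_union, hu, image_univ_of_surjective Quotient.mk_surjective]

theorem AdmCut.image_mk {V₁ V₂ : Set V} (hc : AdmCut src tgt V₁ V₂) (h : CycleFree src tgt)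
    (hs : s.Saturates V₁) :
    AdmCut (csrc src tgt s) (ctgt src tgt s) (Quotient.mk s '' V₁) (Quotient.mk s '' V₂) :=
  admCut_of_isForwardClosed (hs.disjoint_image_mk hc.1) (image_mk_union_eq_univ hc.2.1)
    ((hc.isForwardClosed h).image_mk hs)

theorem AdmCut.preimage_mk {U₁ U₂ : Set (Quotient s)}
    (hc : AdmCut (csrc src tgt s) (ctgt src tgt s) U₁ U₂)
    (h : CycleFree (csrc src tgt s) (ctgt src tgt s)) :
    AdmCut src tgt (Quotient.mk s ⁻¹' U₁) (Quotient.mk s ⁻¹' U₂) :=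
  admCut_of_isForwardClosed (hc.1.preimage _) (by rw [← preimage_union, hc.2.1, preimage_univ])
    (hc.isForwardClosed h).preimage_mk

theorem CycleFree.contract_comap_val (h : CycleFree (csrc src tgt s) (ctgt src tgt s))
    {P : Set V} (hP : s.Saturates P) :
    CycleFree (csrc (isrc src tgt P) (itgt src tgt P) (s.comap Subtype.val))
      (ctgt (isrc src tgt P) (itgt src tgt P) (s.comap Subtype.val)) :=
  (h.induced _).of_gIso (gIso_induced_contract src tgt hP).symm

theorem CycleFree.contract_glue {V₁ V₂ : Set V} (hc : AdmCut src tgt V₁ V₂)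
    (h : CycleFree src tgt) {s₁ : Setoid V₁} {s₂ : Setoid V₂}
    (h₁ : CycleFree (csrc (isrc src tgt V₁) (itgt src tgt V₁) s₁)
      (ctgt (isrc src tgt V₁) (itgt src tgt V₁) s₁))
    (h₂ : CycleFree (csrc (isrc src tgt V₂) (itgt src tgt V₂) s₂)
      (ctgt (isrc src tgt V₂) (itgt src tgt V₂) s₂)) :
    CycleFree (csrc src tgt (s₁.glue hc.1 hc.2.1 s₂)) (ctgt src tgt (s₁.glue hc.1 hc.2.1 s₂)) :=
  .of_isForwardClosed ((hc.isForwardClosed h).image_mk (Setoid.saturates_glue_left _ _ _ _))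
    (image_mk_union_eq_univ hc.2.1) (h₁.of_gIso (gIso_contract_glue_left _ _ _ _ _ _))
    (h₂.of_gIso (gIso_contract_glue_right _ _ _ _ _ _))

end Contraction

section Bijection

/-- Side (b) of the bijection. -/
def CutWithCoverings (src tgt : E → V) : Type u :=
  {y : Σ p : Set V × Set V, Setoid ↥p.1 × Setoid ↥p.2 //
    AdmCut src tgt y.1.1 y.1.2 ∧
    CoveringSetoid (isrc src tgt y.1.1) (itgt src tgt y.1.1) y.2.1 ∧
    CycleFree (csrc (isrc src tgt y.1.1) (itgt src tgt y.1.1) y.2.1)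
      (ctgt (isrc src tgt y.1.1) (itgt src tgt y.1.1) y.2.1) ∧
    CoveringSetoid (isrc src tgt y.1.2) (itgt src tgt y.1.2) y.2.2 ∧
    CycleFree (csrc (isrc src tgt y.1.2) (itgt src tgt y.1.2) y.2.2)
      (ctgt (isrc src tgt y.1.2) (itgt src tgt y.1.2) y.2.2)}

/-- Side (a) of the bijection. -/
def CoveringWithCut (src tgt : E → V) : Type u :=
  {x : Σ s : Setoid V, Set (Quotient s) × Set (Quotient s) //
    CoveringSetoid src tgt x.1 ∧
    CycleFree (csrc src tgt x.1) (ctgt src tgt x.1) ∧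
    AdmCut (csrc src tgt x.1) (ctgt src tgt x.1) x.2.1 x.2.2}

variable {src tgt : E → V}

theorem CutWithCoverings.ext {b b' : CutWithCoverings src tgt} (h₁ : b.1.1.1 = b'.1.1.1)
    (h₂ : b.1.1.2 = b'.1.1.2)
    (hs₁ : ∀ v w hv hw hv' hw', b.1.2.1 ⟨v, hv⟩ ⟨w, hw⟩ ↔ b'.1.2.1 ⟨v, hv'⟩ ⟨w, hw'⟩)
    (hs₂ : ∀ v w hv hw hv' hw', b.1.2.2 ⟨v, hv⟩ ⟨w, hw⟩ ↔ b'.1.2.2 ⟨v, hv'⟩ ⟨w, hw'⟩) :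
    b = b' := by
  obtain ⟨⟨⟨P₁, P₂⟩, t₁, t₂⟩, _⟩ := b
  obtain ⟨⟨⟨Q₁, Q₂⟩, u₁, u₂⟩, _⟩ := b'
  dsimp only at h₁ h₂ hs₁ hs₂
  subst h₁ h₂
  obtain rfl : t₁ = u₁ := Setoid.ext fun a b => hs₁ a b a.2 b.2 a.2 b.2
  obtain rfl : t₂ = u₂ := Setoid.ext fun a b => hs₂ a b a.2 b.2 a.2 b.2
  rfl

theorem CoveringWithCut.ext {x x' : CoveringWithCut src tgt} (hs : x.1.1 = x'.1.1)
    (h₁ : ∀ v, Quotient.mk _ v ∈ x.1.2.1 ↔ Quotient.mk _ v ∈ x'.1.2.1)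
    (h₂ : ∀ v, Quotient.mk _ v ∈ x.1.2.2 ↔ Quotient.mk _ v ∈ x'.1.2.2) : x = x' := by
  obtain ⟨⟨s, U₁, U₂⟩, _⟩ := x
  obtain ⟨⟨s', U₁', U₂'⟩, _⟩ := x'
  dsimp only at hs h₁ h₂
  subst hs
  obtain rfl : U₁ = U₁' := Set.ext (Quotient.ind h₁)
  obtain rfl : U₂ = U₂' := Set.ext (Quotient.ind h₂)
  rfl

def CutWithCoverings.toCoveringWithCut (h : CycleFree src tgt) (b : CutWithCoverings src tgt) :
    CoveringWithCut src tgt :=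
  ⟨⟨b.1.2.1.glue b.2.1.1 b.2.1.2.1 b.1.2.2, (Quotient.mk _ '' b.1.1.1, Quotient.mk _ '' b.1.1.2)⟩,
    b.2.2.1.glue b.2.1.1 b.2.1.2.1 b.2.2.2.2.1, .contract_glue b.2.1 h b.2.2.2.1 b.2.2.2.2.2,
    b.2.1.image_mk h (Setoid.saturates_glue_left b.2.1.1 b.2.1.2.1 b.1.2.1 b.1.2.2)⟩

def CoveringWithCut.toCutWithCoverings (x : CoveringWithCut src tgt) : CutWithCoverings src tgt :=
  ⟨⟨(Quotient.mk _ ⁻¹' x.1.2.1, Quotient.mk _ ⁻¹' x.1.2.2),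
      (x.1.1.comap Subtype.val, x.1.1.comap Subtype.val)⟩,
    x.2.2.2.preimage_mk x.2.2.1,
    x.2.1.comap_val (Setoid.saturates_preimage_mk _ _),
    x.2.2.1.contract_comap_val (Setoid.saturates_preimage_mk _ _),
    x.2.1.comap_val (Setoid.saturates_preimage_mk _ _),
    x.2.2.1.contract_comap_val (Setoid.saturates_preimage_mk _ _)⟩

theorem CutWithCoverings.toCutWithCoverings_toCoveringWithCut (h : CycleFree src tgt)
    (b : CutWithCoverings src tgt) : (b.toCoveringWithCut h).toCutWithCoverings = b := by
  obtain ⟨⟨⟨V₁, V₂⟩, s₁, s₂⟩, ⟨hd, hu, -⟩, -⟩ := b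
  exact CutWithCoverings.ext (Setoid.saturates_glue_left hd hu s₁ s₂).preimage_image_mk
    (Setoid.saturates_glue_right hd hu s₁ s₂).preimage_image_mk
    (fun _ _ _ _ hv hw => Setoid.glue_iff_left hd hu s₁ s₂ hv hw)
    (fun _ _ _ _ hv hw => Setoid.glue_iff_right hd hu s₁ s₂ hv hw)

theorem CoveringWithCut.toCoveringWithCut_toCutWithCoverings (h : CycleFree src tgt)
    (x : CoveringWithCut src tgt) : x.toCutWithCoverings.toCoveringWithCut h = x := by
  obtain ⟨⟨s, U₁, U₂⟩, -, hcf, hc⟩ := x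
  have hd := (hc.preimage_mk hcf).1
  have hu := (hc.preimage_mk hcf).2.1
  exact CoveringWithCut.ext
    (Setoid.glue_comap_val hd hu (s.saturates_preimage_mk U₁) (s.saturates_preimage_mk U₂))
    (fun _ => (Setoid.saturates_glue_left hd hu _ _).mk_mem_image_mk_iff)
    (fun _ => (Setoid.saturates_glue_right hd hu _ _).mk_mem_image_mk_iff)

def cutWithCoveringsEquiv (h : CycleFree src tgt) :
    CutWithCoverings src tgt ≃ CoveringWithCut src tgt where
  toFun := CutWithCoverings.toCoveringWithCut h
  invFun := CoveringWithCut.toCutWithCoverings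
  left_inv := CutWithCoverings.toCutWithCoverings_toCoveringWithCut h
  right_inv := CoveringWithCut.toCoveringWithCut_toCutWithCoverings h

end Bijection

theorem stmt13_general (src tgt : E → V) (h : CycleFree src tgt) :
    ∃ F : {y : Σ p : Set V × Set V, Setoid ↥p.1 × Setoid ↥p.2 //
        AdmCut src tgt y.1.1 y.1.2 ∧
        CoveringSetoid (isrc src tgt y.1.1) (itgt src tgt y.1.1) y.2.1 ∧
        CycleFree (csrc (isrc src tgt y.1.1) (itgt src tgt y.1.1) y.2.1)
          (ctgt (isrc src tgt y.1.1) (itgt src tgt y.1.1) y.2.1) ∧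
        CoveringSetoid (isrc src tgt y.1.2) (itgt src tgt y.1.2) y.2.2 ∧
        CycleFree (csrc (isrc src tgt y.1.2) (itgt src tgt y.1.2) y.2.2)
          (ctgt (isrc src tgt y.1.2) (itgt src tgt y.1.2) y.2.2)} ≃
      {x : Σ s : Setoid V, Set (Quotient s) × Set (Quotient s) //
        CoveringSetoid src tgt x.1 ∧
        CycleFree (csrc src tgt x.1) (ctgt src tgt x.1) ∧
        AdmCut (csrc src tgt x.1) (ctgt src tgt x.1) x.2.1 x.2.2},
      ∀ b, (∀ v w : V, (F b).1.1.r v w ↔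
          ((∃ (hv : v ∈ b.1.1.1) (hw : w ∈ b.1.1.1), b.1.2.1.r ⟨v, hv⟩ ⟨w, hw⟩) ∨
           (∃ (hv : v ∈ b.1.1.2) (hw : w ∈ b.1.1.2), b.1.2.2.r ⟨v, hv⟩ ⟨w, hw⟩))) ∧
        (F b).1.2.1 = {x | ∃ v ∈ b.1.1.1, Quotient.mk (F b).1.1 v = x} ∧
        (F b).1.2.2 = {x | ∃ v ∈ b.1.1.2, Quotient.mk (F b).1.1 v = x} ∧
        GIso (isrc (csrc src tgt (F b).1.1) (ctgt src tgt (F b).1.1) (F b).1.2.1)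
             (itgt (csrc src tgt (F b).1.1) (ctgt src tgt (F b).1.1) (F b).1.2.1)
             (csrc (isrc src tgt b.1.1.1) (itgt src tgt b.1.1.1) b.1.2.1)
             (ctgt (isrc src tgt b.1.1.1) (itgt src tgt b.1.1.1) b.1.2.1) ∧
        GIso (isrc (csrc src tgt (F b).1.1) (ctgt src tgt (F b).1.1) (F b).1.2.2)
             (itgt (csrc src tgt (F b).1.1) (ctgt src tgt (F b).1.1) (F b).1.2.2)
             (csrc (isrc src tgt b.1.1.2) (itgt src tgt b.1.1.2) b.1.2.2)
             (ctgt (isrc src tgt b.1.1.2) (itgt src tgt b.1.1.2) b.1.2.2) :=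
  ⟨cutWithCoveringsEquiv h, fun b => ⟨fun _ _ => Iff.rfl, rfl, rfl,
    gIso_contract_glue_left src tgt b.2.1.1 b.2.1.2.1 b.1.2.1 b.1.2.2,
    gIso_contract_glue_right src tgt b.2.1.1 b.2.1.2.1 b.1.2.1 b.1.2.2⟩⟩

/-- the bijection between (a) pairs (poset-compatible covering
subgraph `γ` of `Γ`, admissible cut `(U₁,U₂)` of `Γ/γ`) and (b) triples
(admissible cut `(V₁,V₂)` of `Γ`, poset-compatible covering subgraph `γ'` of
`Γ(V₁)`, poset-compatible covering subgraph `γ''` of `Γ(V₂)`). Under the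
bijection `γ = γ' ⊔ γ''`, `Uᵢ` is the image in `Γ/γ` of `Vᵢ`, and
`(Γ/γ)(Uᵢ) ≅ Γ(Vᵢ)/γ⁽ⁱ⁾`. -/
theorem stmt13 [Fintype V] [Fintype E] (src tgt : E → V) (h : CycleFree src tgt) :
    ∃ F : {y : Σ p : Set V × Set V, Setoid ↥p.1 × Setoid ↥p.2 //
        AdmCut src tgt y.1.1 y.1.2 ∧
        CoveringSetoid (isrc src tgt y.1.1) (itgt src tgt y.1.1) y.2.1 ∧
        CycleFree (csrc (isrc src tgt y.1.1) (itgt src tgt y.1.1) y.2.1)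
          (ctgt (isrc src tgt y.1.1) (itgt src tgt y.1.1) y.2.1) ∧
        CoveringSetoid (isrc src tgt y.1.2) (itgt src tgt y.1.2) y.2.2 ∧
        CycleFree (csrc (isrc src tgt y.1.2) (itgt src tgt y.1.2) y.2.2)
          (ctgt (isrc src tgt y.1.2) (itgt src tgt y.1.2) y.2.2)} ≃
      {x : Σ s : Setoid V, Set (Quotient s) × Set (Quotient s) //
        CoveringSetoid src tgt x.1 ∧
        CycleFree (csrc src tgt x.1) (ctgt src tgt x.1) ∧
        AdmCut (csrc src tgt x.1) (ctgt src tgt x.1) x.2.1 x.2.2},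
      ∀ b, (∀ v w : V, (F b).1.1.r v w ↔
          ((∃ (hv : v ∈ b.1.1.1) (hw : w ∈ b.1.1.1), b.1.2.1.r ⟨v, hv⟩ ⟨w, hw⟩) ∨
           (∃ (hv : v ∈ b.1.1.2) (hw : w ∈ b.1.1.2), b.1.2.2.r ⟨v, hv⟩ ⟨w, hw⟩))) ∧
        (F b).1.2.1 = {x | ∃ v ∈ b.1.1.1, Quotient.mk (F b).1.1 v = x} ∧
        (F b).1.2.2 = {x | ∃ v ∈ b.1.1.2, Quotient.mk (F b).1.1 v = x} ∧
        GIso (isrc (csrc src tgt (F b).1.1) (ctgt src tgt (F b).1.1) (F b).1.2.1)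
             (itgt (csrc src tgt (F b).1.1) (ctgt src tgt (F b).1.1) (F b).1.2.1)
             (csrc (isrc src tgt b.1.1.1) (itgt src tgt b.1.1.1) b.1.2.1)
             (ctgt (isrc src tgt b.1.1.1) (itgt src tgt b.1.1.1) b.1.2.1) ∧
        GIso (isrc (csrc src tgt (F b).1.1) (ctgt src tgt (F b).1.1) (F b).1.2.2)
             (itgt (csrc src tgt (F b).1.1) (ctgt src tgt (F b).1.1) (F b).1.2.2)
             (csrc (isrc src tgt b.1.1.2) (itgt src tgt b.1.1.2) b.1.2.2)
             (ctgt (isrc src tgt b.1.1.2) (itgt src tgt b.1.1.2) b.1.2.2) :=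
  stmt13_general src tgt h
end
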